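/- For α' ∈ ℕ, d ∈ ℕ, and a tuple of positive integers α_u = (α_j)_{j∈u}, define 𝒦̃_u(N, α_u) = {(k_j)_{j∈u} : |κ_j| = α_j ∀j, ∑_{j∈u}‖κ_j‖ = N}. Then for any t ∈ (0,1), ∑_{N=0}^∞ |𝒦̃_u(N, α_u)| t^N ≤ ∏_{j∈u} 1/(α_j! (t⁻¹ − 1)^{α_j}). -/

import Mathlib

/-- The set `κ` of (0-indexed) positions of nonzero binary digits of `k`. -/
def bitset (k : ℕ) : Finset ℕ := (Finset.range k).filter (fun p => k.testBit p)

/-- `‖κ‖ = ∑_{ℓ∈κ} ℓ` in the paper's 1-indexed convention, i.e. `∑_{p∈κ} (p+1)` here. -/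
def wt (κ : Finset ℕ) : ℕ := ∑ p ∈ κ, (p + 1)



open scoped ENNReal

lemma mem_bitset {k p : ℕ} : p ∈ bitset k ↔ k.testBit p := by
  simp only [bitset, Finset.mem_filter, Finset.mem_range, and_iff_right_iff_imp]
  intro h
  calc p < 2 ^ p := Nat.lt_two_pow_self
    _ ≤ k := Nat.ge_two_pow_of_testBit h

lemma bitset_injective : Function.Injective bitset := by
  intro a b h
  refine Nat.eq_of_testBit_eq fun i => ?_
  have := Finset.ext_iff.mp h i
  simp only [mem_bitset] at this
  by_cases ha : a.testBit i
  · simp [ha, this.mp ha]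
  · by_cases hb : b.testBit i
    · exact absurd (this.mpr hb) ha
    · simp [ha, hb]

lemma tsum_const_fintype {β : Type*} [Fintype β] (c : ℝ≥0∞) :
    ∑' _ : β, c = (Fintype.card β : ℝ≥0∞) * c := by
  rw [tsum_fintype]
  simp [Finset.sum_const, nsmul_eq_mul, Finset.card_univ]

lemma tsum_pi_prod {ι : Type u} [Fintype ι] (h : ι → ℕ → ℝ≥0∞) :
    ∑' k : ι → ℕ, ∏ j, h j (k j) = ∏ j, ∑' n, h j n := by
  revert h
  refine Finite.induction_empty_option (P := fun (γ : Type u) => ∀ [Fintype γ]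
      (h : γ → ℕ → ℝ≥0∞), ∑' k : γ → ℕ, ∏ j, h j (k j) = ∏ j, ∑' n, h j n)
    ?_ ?_ ?_ ι
  · intro γ γ' e ih _ h
    classical
    haveI : Fintype γ := Fintype.ofEquiv γ' e.symm
    rw [← (Equiv.arrowCongr e (Equiv.refl ℕ)).tsum_eq (fun k : γ' → ℕ => ∏ j, h j (k j))]
    have : ∀ g : γ → ℕ, ∏ j, h j ((Equiv.arrowCongr e (Equiv.refl ℕ)) g j)
        = ∏ i, h (e i) (g i) := by
      intro g
      rw [← e.prod_comp (fun j => h j ((Equiv.arrowCongr e (Equiv.refl ℕ)) g j))]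
      refine Finset.prod_congr rfl fun i _ => ?_
      simp [Equiv.arrowCongr]
    rw [tsum_congr this, ih (fun i => h (e i)), e.prod_comp (fun j => ∑' n, h j n)]
  · intro _ h
    haveI : Unique (PEmpty.{u+1} → ℕ) := Pi.uniqueOfIsEmpty _
    rw [tsum_eq_single (default : PEmpty.{u+1} → ℕ)
      (fun b hb => absurd (Subsingleton.elim b default) hb)]
    simp
  · intro γ _ ih instO h
    obtain rfl : instO = instFintypeOption := Subsingleton.elim _ _
    rw [← (Equiv.piOptionEquivProd (β := fun _ => ℕ)).symm.tsum_eq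
      (fun k : Option γ → ℕ => ∏ j, h j (k j))]
    have key : ∀ p : ℕ × (γ → ℕ), ∏ j, h j ((Equiv.piOptionEquivProd (β := fun _ => ℕ)).symm p j)
        = h none p.1 * ∏ i, h (some i) (p.2 i) := by
      intro p
      rw [Fintype.prod_option]
      simp [Equiv.piOptionEquivProd]
    rw [tsum_congr key, ENNReal.tsum_prod', Fintype.prod_option]
    simp_rw [ENNReal.tsum_mul_left, ENNReal.tsum_mul_right, ih]



def embFiberEquiv (α : ℕ) (κ : Finset ℕ) (hκ : κ.card = α) :
    {f : Fin α ↪ ℕ // Finset.univ.map f = κ} ≃ (Fin α ↪ κ) where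
  toFun f := ⟨fun i => ⟨f.1 i, by
      have h2 := f.2
      have : f.1 i ∈ Finset.univ.map f.1 := Finset.mem_map_of_mem _ (Finset.mem_univ i)
      rwa [h2] at this⟩,
    fun i i' hii => f.1.injective (congrArg Subtype.val hii)⟩
  invFun g := ⟨g.trans (Function.Embedding.subtype _), by
    refine Finset.eq_of_subset_of_card_le ?_ ?_
    · intro x hx
      simp only [Finset.mem_map] at hx
      obtain ⟨i, -, rfl⟩ := hx
      exact (g i).2
    · rw [Finset.card_map, hκ, Finset.card_fin]⟩
  left_inv f := Subtype.ext (by ext i; rfl)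
  right_inv g := by ext i; rfl

lemma card_embFiber (α : ℕ) (κ : Finset ℕ) (hκ : κ.card = α) :
    Nat.card {f : Fin α ↪ ℕ // Finset.univ.map f = κ} = α.factorial := by
  rw [Nat.card_congr (embFiberEquiv α κ hκ), Nat.card_eq_fintype_card,
    Fintype.card_embedding_eq]
  simp [Fintype.card_coe, hκ, Nat.descFactorial_self]

lemma tsum_const_finite {β : Type*} [Finite β] (c : ℝ≥0∞) :
    ∑' _ : β, c = (Nat.card β : ℝ≥0∞) * c := by
  cases nonempty_fintype β
  rw [tsum_fintype]
  simp [Finset.sum_const, nsmul_eq_mul, Nat.card_eq_fintype_card, Finset.card_univ]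

lemma nat_card_mul_le_tsum_const {β : Type*} (c : ℝ≥0∞) :
    (Nat.card β : ℝ≥0∞) * c ≤ ∑' _ : β, c := by
  cases finite_or_infinite β
  · exact (tsum_const_finite c).ge
  · simp [Nat.card_eq_zero_of_infinite]

lemma key_bound (α : ℕ) (τ : ℝ≥0∞) :
    (α.factorial : ℝ≥0∞) * ∑' κ : {κ : Finset ℕ // κ.card = α}, τ ^ wt κ.1
      ≤ (τ * (1 - τ)⁻¹) ^ α := by
  classical
  set F : (Fin α ↪ ℕ) → {κ : Finset ℕ // κ.card = α} :=
    fun f => ⟨Finset.univ.map f, by rw [Finset.card_map, Finset.card_fin]⟩ with hF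
  have hwt : ∀ (κ : {κ : Finset ℕ // κ.card = α}) (f : {f : Fin α ↪ ℕ // F f = κ}),
      ∑ i, (f.1 i + 1) = wt κ.1 := by
    intro κ f
    have h2 : Finset.univ.map f.1 = κ.1 := congrArg Subtype.val f.2
    rw [← h2, wt, Finset.sum_map]
  have inner : ∀ κ : {κ : Finset ℕ // κ.card = α},
      ∑' f : {f : Fin α ↪ ℕ // F f = κ}, τ ^ (∑ i, (f.1 i + 1))
        = (α.factorial : ℝ≥0∞) * τ ^ wt κ.1 := by
    intro κ
    have e : {f : Fin α ↪ ℕ // F f = κ} ≃ {f : Fin α ↪ ℕ // Finset.univ.map f = κ.1} :=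
      Equiv.subtypeEquivRight (fun f => by
        constructor
        · intro hf; exact congrArg Subtype.val hf
        · intro hf; exact Subtype.ext hf)
    haveI : Finite {f : Fin α ↪ ℕ // F f = κ} :=
      Finite.of_equiv _ ((e.trans (embFiberEquiv α κ.1 κ.2)).symm)
    rw [tsum_congr (fun f => by rw [hwt κ f]), tsum_const_finite,
      Nat.card_congr e, card_embFiber α κ.1 κ.2]
  calc (α.factorial : ℝ≥0∞) * ∑' κ : {κ : Finset ℕ // κ.card = α}, τ ^ wt κ.1
      = ∑' κ : {κ : Finset ℕ // κ.card = α}, (α.factorial : ℝ≥0∞) * τ ^ wt κ.1 :=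
        ENNReal.tsum_mul_left.symm
    _ = ∑' κ : {κ : Finset ℕ // κ.card = α},
          ∑' f : {f : Fin α ↪ ℕ // F f = κ}, τ ^ (∑ i, (f.1 i + 1)) :=
        (tsum_congr fun κ => (inner κ).symm)
    _ = ∑' σ : (Σ κ : {κ : Finset ℕ // κ.card = α}, {f : Fin α ↪ ℕ // F f = κ}),
          τ ^ (∑ i, (σ.2.1 i + 1)) := (ENNReal.tsum_sigma' (fun σ : (Σ κ : {κ : Finset ℕ // κ.card = α}, {f : Fin α ↪ ℕ // F f = κ}) => τ ^ (∑ i, (σ.2.1 i + 1)))).symm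
    _ = ∑' f : Fin α ↪ ℕ, τ ^ (∑ i, (f i + 1)) :=
        (Equiv.sigmaFiberEquiv F).tsum_eq (fun f => τ ^ (∑ i, (f i + 1)))
    _ ≤ ∑' f : Fin α → ℕ, τ ^ (∑ i, (f i + 1)) := by
        refine ENNReal.summable.tsum_le_tsum_of_inj (fun f => (f : Fin α → ℕ))
          (fun f g hfg => Function.Embedding.coe_injective hfg)
          (fun _ _ => zero_le) (fun _ => le_rfl) ENNReal.summable
    _ = ∑' f : Fin α → ℕ, ∏ i, τ ^ (f i + 1) := by
        refine tsum_congr fun f => ?_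
        rw [Finset.prod_pow_eq_pow_sum]
    _ = ∏ i : Fin α, ∑' n : ℕ, τ ^ (n + 1) := tsum_pi_prod (fun (_ : Fin α) (n : ℕ) => τ ^ (n + 1))
    _ = (∑' n : ℕ, τ ^ (n + 1)) ^ α := by
        rw [Finset.prod_const, Finset.card_univ, Fintype.card_fin]
    _ = (τ * (1 - τ)⁻¹) ^ α := by
        congr 1
        simp_rw [pow_succ, mul_comm]
        rw [ENNReal.tsum_mul_left, ENNReal.tsum_geometric]

/-- with `𝒦̃_u(N, α_u) = {(k_j)_{j∈u} : |κ_j| = α_j ∀j, ∑_j ‖κ_j‖ = N}`,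
for any `t ∈ (0,1)` one has
`∑_{N=0}^∞ |𝒦̃_u(N, α_u)| t^N ≤ ∏_{j∈u} 1/(α_j!(t⁻¹−1)^{α_j})`. -/
theorem stmt17 {ι : Type*} [Fintype ι] (αu : ι → ℕ) (hαu : ∀ j, 1 ≤ αu j)
    (t : ℝ) (ht0 : 0 < t) (ht1 : t < 1) :
    (∑' N : ℕ, (Nat.card {k : ι → ℕ //
        (∀ j, (bitset (k j)).card = αu j) ∧ ∑ j, wt (bitset (k j)) = N} : ℝ) * t ^ N)
      ≤ ∏ j, 1 / ((αu j).factorial * (t⁻¹ - 1) ^ (αu j)) := by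
  classical
  set τ : ℝ≥0∞ := ENNReal.ofReal t with hτ
  have hτtop : τ ≠ ∞ := ENNReal.ofReal_ne_top
  have hτ1 : τ < 1 := by
    rw [hτ, ← ENNReal.ofReal_one]
    exact (ENNReal.ofReal_lt_ofReal_iff one_pos).mpr ht1
  have h1τ : (1 : ℝ≥0∞) - τ ≠ 0 := by
    rw [Ne, tsub_eq_zero_iff_le]
    exact not_le.mpr hτ1
  have hX : τ * (1 - τ)⁻¹ ≠ ∞ :=
    ENNReal.mul_ne_top hτtop (ENNReal.inv_ne_top.mpr h1τ)
  set S : Set (ι → ℕ) := {k | ∀ j, (bitset (k j)).card = αu j} with hS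
  set g : S → ℕ := fun k => ∑ j, wt (bitset (k.1 j)) with hg
  set h : ι → ℕ → ℝ≥0∞ :=
    fun j n => if (bitset n).card = αu j then τ ^ wt (bitset n) else 0 with hh
  -- per-coordinate bound
  have perj : ∀ j, ∑' n : ℕ, h j n
      ≤ ((αu j).factorial : ℝ≥0∞)⁻¹ * (τ * (1 - τ)⁻¹) ^ (αu j) := by
    intro j
    have e1 : ∑' n : ℕ, h j n
        = ∑' n : {n : ℕ // (bitset n).card = αu j}, τ ^ wt (bitset n.1) := by
      refine Eq.symm ((tsum_subtype {n : ℕ | (bitset n).card = αu j}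
        (fun n => τ ^ wt (bitset n))).trans (tsum_congr fun n => ?_))
      rw [Set.indicator_apply]
      by_cases hn : (bitset n).card = αu j <;> simp [hh, hn]
    have e2 : ∑' n : {n : ℕ // (bitset n).card = αu j}, τ ^ wt (bitset n.1)
        ≤ ∑' κ : {κ : Finset ℕ // κ.card = αu j}, τ ^ wt κ.1 := by
      refine ENNReal.summable.tsum_le_tsum_of_inj (fun n => ⟨bitset n.1, n.2⟩)
        (fun a b hab => Subtype.ext (bitset_injective (congrArg Subtype.val hab)))
        (fun _ _ => zero_le) (fun _ => le_rfl) ENNReal.summable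
    have e3 : ∑' κ : {κ : Finset ℕ // κ.card = αu j}, τ ^ wt κ.1
        ≤ ((αu j).factorial : ℝ≥0∞)⁻¹ * (τ * (1 - τ)⁻¹) ^ (αu j) := by
      have hfac0 : ((αu j).factorial : ℝ≥0∞) ≠ 0 := by
        exact_mod_cast (Nat.factorial_pos (αu j)).ne'
      have hfact : ((αu j).factorial : ℝ≥0∞) ≠ ∞ := ENNReal.natCast_ne_top _
      calc ∑' κ : {κ : Finset ℕ // κ.card = αu j}, τ ^ wt κ.1
          = ((αu j).factorial : ℝ≥0∞)⁻¹ * (((αu j).factorial : ℝ≥0∞)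
              * ∑' κ : {κ : Finset ℕ // κ.card = αu j}, τ ^ wt κ.1) := by
            rw [← mul_assoc, ENNReal.inv_mul_cancel hfac0 hfact, one_mul]
        _ ≤ _ := mul_le_mul_right (key_bound (αu j) τ) _
    exact e1 ▸ (e2.trans e3)
  -- main chain in ℝ≥0∞
  have cardeq : ∀ N : ℕ, Nat.card {k : ι → ℕ //
      (∀ j, (bitset (k j)).card = αu j) ∧ ∑ j, wt (bitset (k j)) = N}
      = Nat.card {x : S // g x = N} := by
    intro N
    refine Nat.card_congr ⟨fun x => ⟨⟨x.1, x.2.1⟩, x.2.2⟩,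
      fun y => ⟨y.1.1, y.1.2, y.2⟩, fun x => rfl, fun y => rfl⟩
  have main : (∑' N : ℕ, (Nat.card {k : ι → ℕ //
      (∀ j, (bitset (k j)).card = αu j) ∧ ∑ j, wt (bitset (k j)) = N} : ℝ≥0∞) * τ ^ N)
      ≤ ∏ j, ((αu j).factorial : ℝ≥0∞)⁻¹ * (τ * (1 - τ)⁻¹) ^ (αu j) := by
    calc (∑' N : ℕ, (Nat.card {k : ι → ℕ //
        (∀ j, (bitset (k j)).card = αu j) ∧ ∑ j, wt (bitset (k j)) = N} : ℝ≥0∞) * τ ^ N)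
        ≤ ∑' N : ℕ, ∑' _ : {x : S // g x = N}, τ ^ N := by
          refine ENNReal.tsum_le_tsum fun N => ?_
          rw [cardeq N]
          exact nat_card_mul_le_tsum_const _
      _ = ∑' σ : (Σ N : ℕ, {x : S // g x = N}), τ ^ σ.1 :=
          (ENNReal.tsum_sigma' (fun σ : (Σ N : ℕ, {x : S // g x = N}) => τ ^ σ.1)).symm
      _ = ∑' x : S, τ ^ g x := by
          rw [← (Equiv.sigmaFiberEquiv g).tsum_eq (fun x : S => τ ^ g x)]
          exact tsum_congr fun σ => by rw [Equiv.sigmaFiberEquiv]; simp [σ.2.2]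
      _ = ∑' k : ι → ℕ, ∏ j, h j (k j) := by
          refine Eq.trans (tsum_congr fun x : S =>
            (Finset.prod_pow_eq_pow_sum Finset.univ (fun j => wt (bitset (x.1 j))) τ).symm) ?_
          refine Eq.trans (tsum_subtype S (fun k => ∏ j, τ ^ wt (bitset (k j)))) ?_
          · refine tsum_congr fun k => ?_
            rw [Set.indicator_apply]
            by_cases hk : k ∈ S
            · rw [if_pos hk]
              exact Finset.prod_congr rfl fun j _ => by
                rw [hh]; simp only [hk j, if_true]
            · rw [if_neg hk]
              rw [hS, Set.mem_setOf_eq] at hk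
              push_neg at hk
              obtain ⟨j, hj⟩ := hk
              exact (Finset.prod_eq_zero (Finset.mem_univ j) (by rw [hh]; simp [hj])).symm
      _ = ∏ j, ∑' n : ℕ, h j n := tsum_pi_prod h
      _ ≤ ∏ j, ((αu j).factorial : ℝ≥0∞)⁻¹ * (τ * (1 - τ)⁻¹) ^ (αu j) :=
          Finset.prod_le_prod' fun j _ => perj j
  -- transfer to ℝ
  have hRtop : (∏ j, ((αu j).factorial : ℝ≥0∞)⁻¹ * (τ * (1 - τ)⁻¹) ^ (αu j)) ≠ ∞ := by
    refine ENNReal.prod_ne_top fun j _ => ?_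
    exact ENNReal.mul_ne_top (ENNReal.inv_ne_top.mpr (by
      exact_mod_cast (Nat.factorial_pos (αu j)).ne')) (ENNReal.pow_ne_top hX)
  have hterm : ∀ N : ℕ, ((Nat.card {k : ι → ℕ //
      (∀ j, (bitset (k j)).card = αu j) ∧ ∑ j, wt (bitset (k j)) = N} : ℝ≥0∞) * τ ^ N) ≠ ∞ :=
    fun N => ENNReal.mul_ne_top (ENNReal.natCast_ne_top _) (ENNReal.pow_ne_top hτtop)
  have lhs_eq : (∑' N : ℕ, (Nat.card {k : ι → ℕ //
      (∀ j, (bitset (k j)).card = αu j) ∧ ∑ j, wt (bitset (k j)) = N} : ℝ) * t ^ N)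
      = (∑' N : ℕ, (Nat.card {k : ι → ℕ //
      (∀ j, (bitset (k j)).card = αu j) ∧ ∑ j, wt (bitset (k j)) = N} : ℝ≥0∞) * τ ^ N).toReal := by
    rw [ENNReal.tsum_toReal_eq hterm]
    refine tsum_congr fun N => ?_
    rw [ENNReal.toReal_mul, ENNReal.toReal_pow, ENNReal.toReal_natCast,
      hτ, ENNReal.toReal_ofReal ht0.le]
  have h1t : (0:ℝ) < 1 - t := by linarith
  have rhs_eq : (∏ j, ((αu j).factorial : ℝ≥0∞)⁻¹ * (τ * (1 - τ)⁻¹) ^ (αu j)).toReal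
      = ∏ j, 1 / ((αu j).factorial * (t⁻¹ - 1) ^ (αu j)) := by
    rw [ENNReal.toReal_prod]
    refine Finset.prod_congr rfl fun j _ => ?_
    have h1mτ : (1:ℝ≥0∞) - τ = ENNReal.ofReal (1 - t) := by
      rw [hτ, ← ENNReal.ofReal_one, ← ENNReal.ofReal_sub _ ht0.le]
    rw [ENNReal.toReal_mul, ENNReal.toReal_inv, ENNReal.toReal_pow, ENNReal.toReal_mul,
      ENNReal.toReal_inv, h1mτ, ENNReal.toReal_ofReal h1t.le, hτ,
      ENNReal.toReal_ofReal ht0.le, ENNReal.toReal_natCast]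
    have hfacne : ((αu j).factorial : ℝ) ≠ 0 := by
      exact_mod_cast (Nat.factorial_pos (αu j)).ne'
    have ht' : t⁻¹ - 1 = (1 - t) / t := by field_simp
    rw [ht', div_pow, mul_pow]
    have hp1 : ((1:ℝ) - t) ^ (αu j) ≠ 0 := pow_ne_zero _ h1t.ne'
    have hp2 : t ^ (αu j) ≠ 0 := pow_ne_zero _ ht0.ne'
    field_simp
    rw [← mul_pow, one_div, inv_mul_cancel₀ h1t.ne', one_pow]
  rw [lhs_eq, ← rhs_eq]
  exact ENNReal.toReal_mono hRtop main
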